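/- For the Chebyshev map T₃(x) = 4x³ - 3x with invariant density h(x) = 1/(π√(1-x²)), any function of the form c(x,y) = h(x)γ₀(y) + x h(x) γ₁(y) satisfies the functional equation c(x') = ∑_{x ∈ T₃^{-1}(x')} (1/|T₃'(x)|)[c(x) - (1/6)x³ h(x) r(y)] for all x' if and only if γ₁(y) = -(1/24) r(y) (with γ₀ arbitrary). -/

import Mathlib

open Real

noncomputable def h : ℝ → ℝ := fun x => 1 / (π * Real.sqrt (1 - x ^ 2))

noncomputable def T₃ : ℝ → ℝ := fun x => 4 * x ^ 3 - 3 * x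

/-!
Every `x' ∈ (-1, 1)` has exactly three preimages under `T₃` in `[-1, 1]`, one in each of
`(-1, -1/2)`, `(-1/2, 1/2)`, `(1/2, 1)`; they are the roots of `4X³ - 3X - x'`, so they sum to `0`.
From `1 - T₃(x)² = (1 - x²)(4x² - 1)²` one gets `h x / |T₃' x| = h (T₃ x) / 3`, so the right-hand
side of the functional equation is `h x' / 3` times the sum over the three roots of
`γ₀ + x γ₁ - x³ r / 6`. Using `x³ = (x' + 3x) / 4` this equals `h x' γ₀ - x' h x' r / 24`,
which matches the left-hand side exactly when `γ₁ = -r / 24`.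
-/

lemma continuous_T₃ : Continuous T₃ := by
  unfold T₃; fun_prop

lemma deriv_T₃ (x : ℝ) : deriv T₃ x = 3 * (4 * x ^ 2 - 1) := by
  have hT : HasDerivAt T₃ (4 * (3 * x ^ 2) - 3) x := by
    unfold T₃
    exact ((hasDerivAt_pow 3 x).const_mul 4).sub ((hasDerivAt_id x).const_mul 3) |>.congr_deriv
      (by simp)
  rw [hT.deriv]; ring

lemma one_sub_T₃_sq (x : ℝ) : 1 - T₃ x ^ 2 = (1 - x ^ 2) * (4 * x ^ 2 - 1) ^ 2 := by
  unfold T₃; ring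

lemma h_pos {x : ℝ} (hx : x ∈ Set.Ioo (-1 : ℝ) 1) : 0 < h x := by
  have : 0 < 1 - x ^ 2 := by nlinarith [hx.1, hx.2]
  unfold h; positivity

lemma inv_abs_deriv_T₃_mul_h (x : ℝ) : 1 / |deriv T₃ x| * h x = h (T₃ x) / 3 := by
  have hsqrt : √(1 - T₃ x ^ 2) = √(1 - x ^ 2) * |4 * x ^ 2 - 1| := by
    rw [one_sub_T₃_sq, Real.sqrt_mul' _ (sq_nonneg _), Real.sqrt_sq_eq_abs]
  simp only [h, deriv_T₃, hsqrt, abs_mul, abs_of_pos (show (0 : ℝ) < 3 by norm_num)]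
  field_simp

lemma add_add_eq_zero_of_T₃_eq {a b c : ℝ} (hab : a ≠ b) (hac : a ≠ c) (hbc : b ≠ c)
    (hTab : T₃ a = T₃ b) (hTac : T₃ a = T₃ c) : a + b + c = 0 := by
  have quad_of_ne {u v : ℝ} (huv : u ≠ v) (hT : T₃ u = T₃ v) : 4 * (u ^ 2 + u * v + v ^ 2) = 3 := by
    have : (u - v) * (4 * (u ^ 2 + u * v + v ^ 2) - 3) = 0 := by
      unfold T₃ at hT; linear_combination hT
    linarith [(mul_eq_zero.mp this).resolve_left (sub_ne_zero.mpr huv)]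
  have : (b - c) * (a + b + c) = 0 := by
    linear_combination (quad_of_ne hab hTab - quad_of_ne hac hTac) / 4
  exact (mul_eq_zero.mp this).resolve_left (sub_ne_zero.mpr hbc)

lemma exists_T₃_eq_of_mem_Ioo {u v x' : ℝ} (huv : u ≤ v)
    (hx' : x' ∈ Set.Ioo (T₃ u) (T₃ v) ∪ Set.Ioo (T₃ v) (T₃ u)) :
    ∃ x ∈ Set.Ioo u v, T₃ x = x' := by
  have hcont := continuous_T₃.continuousOn (s := Set.Icc u v)
  rcases hx' with hx' | hx'
  · exact intermediate_value_Ioo huv hcont hx'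
  · exact intermediate_value_Ioo' huv hcont hx'

lemma T₃_preimage_eq {x' : ℝ} (hx' : x' ∈ Set.Ioo (-1 : ℝ) 1) :
    ∃ a b c : ℝ, a ≠ b ∧ a ≠ c ∧ b ≠ c ∧ a + b + c = 0 ∧
      {x : ℝ | x ∈ Set.Icc (-1 : ℝ) 1 ∧ T₃ x = x'} = {a, b, c} := by
  have hvals : T₃ (-1) = -1 ∧ T₃ (-1 / 2) = 1 ∧ T₃ (1 / 2) = -1 ∧ T₃ 1 = 1 := by
    unfold T₃; norm_num
  obtain ⟨a, ⟨ha₁, ha₂⟩, hTa⟩ := exists_T₃_eq_of_mem_Ioo (u := -1) (v := -1 / 2) (by norm_num)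
    (Or.inl (by rwa [hvals.1, hvals.2.1]))
  obtain ⟨b, ⟨hb₁, hb₂⟩, hTb⟩ := exists_T₃_eq_of_mem_Ioo (u := -1 / 2) (v := 1 / 2) (by norm_num)
    (Or.inr (by rwa [hvals.2.1, hvals.2.2.1]))
  obtain ⟨c, ⟨hc₁, hc₂⟩, hTc⟩ := exists_T₃_eq_of_mem_Ioo (u := 1 / 2) (v := 1) (by norm_num)
    (Or.inl (by rwa [hvals.2.2.1, hvals.2.2.2]))
  have hab : a ≠ b := by linarith
  have hac : a ≠ c := by linarith
  have hbc : b ≠ c := by linarith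
  have habc := add_add_eq_zero_of_T₃_eq hab hac hbc (hTa.trans hTb.symm) (hTa.trans hTc.symm)
  refine ⟨a, b, c, hab, hac, hbc, habc, Set.ext fun x => ⟨?_, ?_⟩⟩
  · rintro ⟨-, hTx⟩
    by_contra hx
    simp only [Set.mem_insert_iff, Set.mem_singleton_iff, not_or] at hx
    have := add_add_eq_zero_of_T₃_eq hab (Ne.symm hx.1) (Ne.symm hx.2.1)
      (hTa.trans hTb.symm) (hTa.trans hTx.symm)
    exact hx.2.2 (by linarith)
  · rintro (rfl | rfl | rfl)
    exacts [⟨⟨ha₁.le, by linarith⟩, hTa⟩, ⟨⟨by linarith, by linarith⟩, hTb⟩,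
      ⟨⟨by linarith, hc₂.le⟩, hTc⟩]

lemma finsum_T₃_preimage {x' : ℝ} (hx' : x' ∈ Set.Ioo (-1 : ℝ) 1) (G₀ G₁ R : ℝ) :
    ∑ᶠ x ∈ {x : ℝ | x ∈ Set.Icc (-1 : ℝ) 1 ∧ T₃ x = x'},
      (1 / |deriv T₃ x|) * ((h x * G₀ + x * h x * G₁) - (1 / 6) * x ^ 3 * h x * R)
      = h x' * G₀ - x' * h x' * (R / 24) := by
  obtain ⟨a, b, c, hab, hac, hbc, habc, hS⟩ := T₃_preimage_eq hx'
  have hterm : ∀ x ∈ {x : ℝ | x ∈ Set.Icc (-1 : ℝ) 1 ∧ T₃ x = x'},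
      (1 / |deriv T₃ x|) * ((h x * G₀ + x * h x * G₁) - (1 / 6) * x ^ 3 * h x * R)
        = h x' / 3 * (G₀ + x * G₁ - (x' + 3 * x) / 24 * R) := by
    rintro x ⟨-, hTx⟩
    have hcube : x ^ 3 = (x' + 3 * x) / 4 := by rw [← hTx]; unfold T₃; ring
    have hinv := inv_abs_deriv_T₃_mul_h x
    rw [hTx] at hinv
    rw [hcube, ← hinv]
    ring
  rw [finsum_mem_congr rfl hterm, hS, finsum_mem_insert _ (by simp [hab, hac]) (Set.toFinite _),
    finsum_mem_pair hbc]
  linear_combination h x' / 3 * (G₁ - R / 8) * habc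

/-- For T₃, c(x,y) = h(x)γ₀(y) + x h(x)γ₁(y) solves the functional equation
iff γ₁ = -(1/24) r (γ₀ arbitrary). -/
theorem T3_functional_equation (γ₀ γ₁ r : ℝ → ℝ) :
    (∀ x' ∈ Set.Ioo (-1 : ℝ) 1, ∀ y : ℝ,
      h x' * γ₀ y + x' * h x' * γ₁ y =
        ∑ᶠ x ∈ {x : ℝ | x ∈ Set.Icc (-1 : ℝ) 1 ∧ T₃ x = x'},
          (1 / |deriv T₃ x|) *
            ((h x * γ₀ y + x * h x * γ₁ y) - (1 / 6) * x ^ 3 * h x * r y)) ↔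
    (∀ y : ℝ, γ₁ y = -(1 / 24) * r y) := by
  constructor
  · intro hfun y
    have hhalf : (1 / 2 : ℝ) ∈ Set.Ioo (-1 : ℝ) 1 := by norm_num
    have heq := hfun (1 / 2) hhalf y
    rw [finsum_T₃_preimage hhalf] at heq
    have hne : (1 / 2 : ℝ) * h (1 / 2) ≠ 0 := (mul_pos (by norm_num) (h_pos hhalf)).ne'
    exact mul_left_cancel₀ hne (show _ * γ₁ y = _ * (-(1 / 24) * r y) by linear_combination heq)
  · intro hγ₁ x' hx' y
    rw [finsum_T₃_preimage hx', hγ₁ y]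
    ring
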